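/- (Corollary 1.) Let A_K ∈ ℝ^{n×n}, μ_ω ∈ ℝⁿ, let Σ_ω ∈ ℝ^{n×n} be positive semidefinite, let s_0 ∈ ℝⁿ, and define μ_0 = s_0, Σ_0 = 0, μ_{k+1} = A_K μ_k + μ_ω and Σ_{k+1} = A_K Σ_k A_Kᵀ + Σ_ω. Then for every ε ∈ (0,1) and every k ≥ 1, E(Σ_{k+1}, μ_{k+1}, n/ε) ⊆ A_K · E(Σ_k, μ_k, n/ε) ⊕ E(Σ_ω, μ_ω, n/ε). -/

import Mathlib

open MeasureTheory Matrix Pointwise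
open scoped Classical

/-- The positive semidefinite square root of a matrix (junk value `0` if the matrix is not
positive semidefinite). -/
noncomputable def msqrt {n : ℕ} (M : Matrix (Fin n) (Fin n) ℝ) : Matrix (Fin n) (Fin n) ℝ :=
  if h : M.PosSemidef then
    (h.1.eigenvectorUnitary.1 * diagonal ((↑) ∘ Real.sqrt ∘ h.1.eigenvalues) *
      (star h.1.eigenvectorUnitary : Matrix (Fin n) (Fin n) ℝ)) else 0

/-- The ellipsoid `E(M, c, r) = {c + M^{1/2} x : xᵀ x ≤ r}` with shape matrix `M`,
center `c` and radius `√r`. -/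
noncomputable def ellipsoid {n : ℕ} (M : Matrix (Fin n) (Fin n) ℝ) (c : Fin n → ℝ) (r : ℝ) :
    Set (Fin n → ℝ) :=
  {x | ∃ y : Fin n → ℝ, y ⬝ᵥ y ≤ r ∧ x = c + (msqrt M).mulVec y}

lemma msqrt_transpose {n : ℕ} {M : Matrix (Fin n) (Fin n) ℝ} (h : M.PosSemidef) :
    (msqrt M)ᵀ = msqrt M := by
  rw [msqrt, dif_pos h, Matrix.star_eq_conjTranspose,
    Matrix.conjTranspose_eq_transpose_of_trivial, Matrix.transpose_mul, Matrix.transpose_mul,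
    Matrix.diagonal_transpose, Matrix.transpose_transpose, Matrix.mul_assoc]

lemma msqrt_mul_self {n : ℕ} {M : Matrix (Fin n) (Fin n) ℝ} (h : M.PosSemidef) :
    msqrt M * msqrt M = M := by
  rw [msqrt, dif_pos h]
  conv_rhs => rw [h.1.spectral_theorem, Unitary.conjStarAlgAut_apply]
  have hU : (star h.1.eigenvectorUnitary : Matrix (Fin n) (Fin n) ℝ) * h.1.eigenvectorUnitary.1 = 1 :=
    Unitary.coe_star_mul_self _
  have hD : diagonal ((↑) ∘ Real.sqrt ∘ h.1.eigenvalues) *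
      diagonal ((↑) ∘ Real.sqrt ∘ h.1.eigenvalues) =
      diagonal (RCLike.ofReal ∘ h.1.eigenvalues : Fin n → ℝ) := by
    rw [Matrix.diagonal_mul_diagonal]
    congr 1; funext i
    exact Real.mul_self_sqrt (h.eigenvalues_nonneg i)
  calc _ = h.1.eigenvectorUnitary.1 * diagonal ((↑) ∘ Real.sqrt ∘ h.1.eigenvalues) *
        ((star h.1.eigenvectorUnitary : Matrix (Fin n) (Fin n) ℝ) * h.1.eigenvectorUnitary.1) *
        diagonal ((↑) ∘ Real.sqrt ∘ h.1.eigenvalues) *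
        (star h.1.eigenvectorUnitary : Matrix (Fin n) (Fin n) ℝ) := by
          simp only [Matrix.mul_assoc]
    _ = _ := by rw [hU, Matrix.mul_one, Matrix.mul_assoc _ (diagonal _) (diagonal _), hD]

lemma dot_self_nonneg' {m : Type*} [Fintype m] (x : m → ℝ) : 0 ≤ x ⬝ᵥ x :=
  Finset.sum_nonneg fun i _ => mul_self_nonneg _

lemma eq_zero_of_dot_self {m : Type*} [Fintype m] {x : m → ℝ} (h : x ⬝ᵥ x = 0) : x = 0 := by
  funext i
  have h' := (Finset.sum_eq_zero_iff_of_nonneg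
    (fun i _ => mul_self_nonneg (x i))).mp h i (Finset.mem_univ i)
  exact mul_self_eq_zero.mp h'

lemma transpose_mulVec_dot {n m : Type*} [Fintype n] [Fintype m]
    (A : Matrix n m ℝ) (v : n → ℝ) (x : m → ℝ) :
    (Aᵀ.mulVec v) ⬝ᵥ x = v ⬝ᵥ A.mulVec x := by
  rw [Matrix.mulVec_transpose, Matrix.dotProduct_mulVec]

lemma symm_dot {n : ℕ} {S : Matrix (Fin n) (Fin n) ℝ} (hS : Sᵀ = S)
    (a b : Fin n → ℝ) : S.mulVec a ⬝ᵥ b = a ⬝ᵥ S.mulVec b := by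
  conv_lhs => rw [← hS]
  rw [transpose_mulVec_dot]

lemma exists_mulVec_sq {n : ℕ} (S : Matrix (Fin n) (Fin n) ℝ) (hS : Sᵀ = S) (z : Fin n → ℝ) :
    ∃ v, (S * S).mulVec v = S.mulVec z := by
  set e := WithLp.equiv 2 (Fin n → ℝ) with he
  let T : EuclideanSpace ℝ (Fin n) →ₗ[ℝ] EuclideanSpace ℝ (Fin n) := Matrix.toEuclideanLin S
  have hT : ∀ x : EuclideanSpace ℝ (Fin n), e (T x) = S.mulVec (e x) := fun x =>
    Matrix.ofLp_toEuclideanLin_apply S x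
  have hinner : ∀ a b : EuclideanSpace ℝ (Fin n), (inner ℝ a b : ℝ) = (e a) ⬝ᵥ (e b) := by
    intro a b
    rw [EuclideanSpace.inner_eq_star_dotProduct, dotProduct_comm]
    rfl
  have hmem : e.symm z ∈ LinearMap.range T ⊔ (LinearMap.range T)ᗮ := by
    rw [Submodule.sup_orthogonal_of_hasOrthogonalProjection]; trivial
  obtain ⟨a, ha, b, hb, hz⟩ := Submodule.mem_sup.mp hmem
  obtain ⟨u, hu⟩ := ha
  have hb0 : S.mulVec (e b) = 0 := by
    apply eq_zero_of_dot_self (x := S.mulVec (e b))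
    have h1 : S.mulVec (e b) ⬝ᵥ S.mulVec (e b) = (e b) ⬝ᵥ S.mulVec (S.mulVec (e b)) := by
      rw [symm_dot hS]
    have h2 : (e b) ⬝ᵥ S.mulVec (S.mulVec (e b)) = (inner ℝ b (T (T b)) : ℝ) := by
      rw [hinner, hT, hT]
    rw [h1, h2, real_inner_comm]
    exact (Submodule.mem_orthogonal _ b).mp hb _ ⟨T b, rfl⟩
  refine ⟨e u, ?_⟩
  have hze : z = e a + e b := by
    have h' := congrArg e hz; rw [e.apply_symm_apply] at h'; rw [← h']; rfl
  have hea : e a = S.mulVec (e u) := by rw [← hu, hT]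
  rw [hze, Matrix.mulVec_add, hb0, add_zero, hea, Matrix.mulVec_mulVec]

lemma exists_sqrt_factor {n : ℕ} {m : Type*} [Fintype m] (M : Matrix (Fin n) m ℝ) (z : Fin n → ℝ) :
    ∃ w : m → ℝ, w ⬝ᵥ w ≤ z ⬝ᵥ z ∧ M.mulVec w = (msqrt (M * Mᵀ)).mulVec z := by
  have hMt : Mᴴ = Mᵀ := Matrix.conjTranspose_eq_transpose_of_trivial M
  have hN : (M * Mᵀ).PosSemidef := hMt ▸ Matrix.posSemidef_self_mul_conjTranspose M
  set S := msqrt (M * Mᵀ) with hSdef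
  have hSsym : Sᵀ = S := by
    exact msqrt_transpose hN
  have hSS : S * S = M * Mᵀ := msqrt_mul_self hN
  obtain ⟨v, hv⟩ := exists_mulVec_sq S hSsym z
  rw [hSS] at hv
  refine ⟨Mᵀ.mulVec v, ?_, by rw [Matrix.mulVec_mulVec, hv]⟩
  have h1 : S.mulVec (S.mulVec v - z) = 0 := by
    rw [Matrix.mulVec_sub, Matrix.mulVec_mulVec, hSS, hv, sub_self]
  have h2 : S.mulVec v ⬝ᵥ (S.mulVec v - z) = 0 := by
    rw [symm_dot hSsym, h1, dotProduct_zero]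
  have h3 : (Mᵀ.mulVec v) ⬝ᵥ (Mᵀ.mulVec v) = S.mulVec v ⬝ᵥ S.mulVec v := by
    rw [transpose_mulVec_dot, Matrix.mulVec_mulVec, ← hSS, ← Matrix.mulVec_mulVec,
      ← symm_dot hSsym]
  have h2' : S.mulVec v ⬝ᵥ S.mulVec v - S.mulVec v ⬝ᵥ z = 0 := by
    rw [← dotProduct_sub]; exact h2
  have hexp : (S.mulVec v - z) ⬝ᵥ (S.mulVec v - z)
      = S.mulVec v ⬝ᵥ S.mulVec v - 2 * (S.mulVec v ⬝ᵥ z) + z ⬝ᵥ z := by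
    have hc : z ⬝ᵥ S.mulVec v = S.mulVec v ⬝ᵥ z := dotProduct_comm _ _
    rw [dotProduct_sub, sub_dotProduct, sub_dotProduct, hc]
    ring
  have hd := dot_self_nonneg' (S.mulVec v - z)
  rw [h3]; linarith

/-- **Corollary 1.** With `μ_0 = s_0`, `Σ_0 = 0`, `μ_{k+1} = A_K μ_k + μ_ω` and
`Σ_{k+1} = A_K Σ_k A_Kᵀ + Σ_ω`, for every `ε ∈ (0,1)` and every `k ≥ 1`,
`E(Σ_{k+1}, μ_{k+1}, n/ε) ⊆ A_K · E(Σ_k, μ_k, n/ε) ⊕ E(Σ_ω, μ_ω, n/ε)`. -/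
theorem ellipsoid_recursion_subset {n : ℕ}
    (AK : Matrix (Fin n) (Fin n) ℝ) (μω : Fin n → ℝ)
    (Sω : Matrix (Fin n) (Fin n) ℝ) (hSω : Sω.PosSemidef)
    (s0 : Fin n → ℝ)
    (μ : ℕ → Fin n → ℝ) (hμ0 : μ 0 = s0) (hμ : ∀ k, μ (k + 1) = AK.mulVec (μ k) + μω)
    (Sk : ℕ → Matrix (Fin n) (Fin n) ℝ)
    (hSk0 : Sk 0 = 0) (hSk : ∀ k, Sk (k + 1) = AK * Sk k * AKᵀ + Sω)
    (ε : ℝ) (hε : ε ∈ Set.Ioo (0 : ℝ) 1) :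
    ∀ k, 1 ≤ k →
      ellipsoid (Sk (k + 1)) (μ (k + 1)) ((n : ℝ) / ε) ⊆
        AK.mulVec '' ellipsoid (Sk k) (μ k) ((n : ℝ) / ε) + ellipsoid Sω μω ((n : ℝ) / ε) := by
  intro k _ x hx
  have hpsd : ∀ j, (Sk j).PosSemidef := by
    intro j; induction j with
    | zero => rw [hSk0]; exact Matrix.PosSemidef.zero
    | succ j ih =>
        rw [hSk j]
        have h1 := ih.mul_mul_conjTranspose_same AK
        rw [Matrix.conjTranspose_eq_transpose_of_trivial] at h1
        exact h1.add hSω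
  obtain ⟨y, hy, hxy⟩ := hx
  -- square roots
  have hQpsd := hpsd k
  set Q := msqrt (Sk k) with hQdef
  have hQsym : Qᵀ = Q := by
    exact msqrt_transpose hQpsd
  have hQQ : Q * Q = Sk k := msqrt_mul_self hQpsd
  set R := msqrt Sω with hRdef
  have hRsym : Rᵀ = R := by
    exact msqrt_transpose hSω
  have hRR : R * R = Sω := msqrt_mul_self hSω
  set B := Matrix.fromCols (AK * Q) R with hBdef
  have hBB : B * Bᵀ = Sk (k + 1) := by
    rw [hBdef, Matrix.transpose_fromCols, Matrix.fromCols_mul_fromRows, hSk]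
    congr 1
    · rw [Matrix.transpose_mul, hQsym, ← hQQ]
      noncomm_ring
    · rw [hRsym, hRR]
  obtain ⟨w, hw, hMw⟩ := exists_sqrt_factor B y
  rw [hBB] at hMw
  set u := w ∘ Sum.inl with hudef
  set v := w ∘ Sum.inr with hvdef
  have hwelim : w = Sum.elim u v := by funext i; cases i <;> rfl
  have hsplit : B.mulVec w = AK.mulVec (Q.mulVec u) + R.mulVec v := by
    rw [hwelim, hBdef, Matrix.fromCols_mulVec_sumElim, ← Matrix.mulVec_mulVec]
  have hdot : w ⬝ᵥ w = u ⬝ᵥ u + v ⬝ᵥ v := by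
    rw [hwelim]
    simp [dotProduct, Fintype.sum_sum_type, hudef, hvdef]
  have hu : u ⬝ᵥ u ≤ (n : ℝ) / ε := by
    have := dot_self_nonneg' v; rw [hdot] at hw; linarith
  have hv : v ⬝ᵥ v ≤ (n : ℝ) / ε := by
    have := dot_self_nonneg' u; rw [hdot] at hw; linarith
  refine Set.mem_add.mpr ⟨AK.mulVec (μ k + Q.mulVec u), ?_, μω + R.mulVec v, ?_, ?_⟩
  · exact Set.mem_image_of_mem _ ⟨u, hu, rfl⟩
  · exact ⟨v, hv, rfl⟩
  · rw [hxy, hμ k, ← hMw, hsplit, Matrix.mulVec_add]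
    abel
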